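/- Let g ≥ 1 and let (α_1,…,α_k; β_1,…,β_ℓ) be a partial symplectic basis of (ℤ/2)^{2g}. Then there exists a partial symplectic basis (a_1,…,a_k; b_1,…,b_ℓ) of ℤ^{2g} such that r(a_i) = α_i for 1 ≤ i ≤ k and r(b_j) = β_j for 1 ≤ j ≤ ℓ. -/

import Mathlib

open scoped BigOperators

/-- The free module `R^{2g}`. -/
abbrev SV (g : ℕ) (R : Type) [CommRing R] : Type := Fin (2*g) → R

/-- The standard symplectic form on `R^{2g}`. -/
def symplForm (g : ℕ) (R : Type) [CommRing R] (v w : SV g R) : R :=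
  ∑ i : Fin g,
    (v ⟨i.1, by have := i.isLt; omega⟩ * w ⟨g + i.1, by have := i.isLt; omega⟩ -
      v ⟨g + i.1, by have := i.isLt; omega⟩ * w ⟨i.1, by have := i.isLt; omega⟩)

/-- `(a; b)` is a symplectic basis of `R^{2g}`. -/
def IsSymplBasis (g : ℕ) (R : Type) [CommRing R] (a b : Fin g → SV g R) : Prop :=
  (∃ B : Module.Basis (Fin g ⊕ Fin g) R (SV g R),
      (∀ i, B (Sum.inl i) = a i) ∧ (∀ i, B (Sum.inr i) = b i)) ∧
  (∀ i j, symplForm g R (a i) (a j) = 0) ∧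
  (∀ i j, symplForm g R (b i) (b j) = 0) ∧
  (∀ i j, symplForm g R (a i) (b j) = if i = j then 1 else 0)

/-- `(a_1,…,a_k; b_1,…,b_l)` is a partial symplectic basis of `R^{2g}`:
it extends to a symplectic basis. -/
def IsPartialSymplBasis (g : ℕ) (R : Type) [CommRing R] {k l : ℕ}
    (a : Fin k → SV g R) (b : Fin l → SV g R) : Prop :=
  ∃ (hk : k ≤ g) (hl : l ≤ g) (A B : Fin g → SV g R), IsSymplBasis g R A B ∧
    (∀ i, A (Fin.castLE hk i) = a i) ∧ (∀ j, B (Fin.castLE hl j) = b j)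

/-- The lax vector `⟨v⟩ = {v, -v}`. -/
def lax {α : Type} [Neg α] (v : α) : Set α := {v, -v}

/-- Standard simplices of the complex of lax isotropic bases `B_g(R)`.  (The set of
vertices of a simplex.) -/
def IsStdSimplex (g : ℕ) (R : Type) [CommRing R] (σ : Set (Set (SV g R))) : Prop :=
  ∃ (k : ℕ) (a : Fin k → SV g R),
    IsPartialSymplBasis g R a (fun i : Fin 0 => i.elim0) ∧
    σ = Set.range fun i => lax (a i)

/-- Simplices of intersection type of the augmented complex `B̂_g(R)`. -/
def IsIntSimplex (g : ℕ) (R : Type) [CommRing R] (σ : Set (Set (SV g R))) : Prop :=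
  ∃ (k : ℕ) (a : Fin k → SV g R) (b : SV g R), 1 ≤ k ∧
    IsPartialSymplBasis g R a (fun _ : Fin 1 => b) ∧
    σ = insert (lax b) (Set.range fun i => lax (a i))

/-- Simplices of additive type of the augmented complex `B̂_g(R)`. -/
def IsAddSimplex (g : ℕ) (R : Type) [CommRing R] (σ : Set (Set (SV g R))) : Prop :=
  ∃ (k m : ℕ) (a : Fin k → SV g R) (ε : Fin k → R), (m = 2 ∨ m = 3) ∧ m ≤ k ∧
    (∀ i, ε i = 1 ∨ ε i = -1) ∧
    IsPartialSymplBasis g R a (fun i : Fin 0 => i.elim0) ∧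
    σ = insert (lax (∑ i : Fin k, if (i : ℕ) < m then ε i • a i else 0))
        (Set.range fun i => lax (a i))

/-- Simplices of the augmented complex of lax isotropic bases `B̂_g(R)`. -/
def IsHatSimplex (g : ℕ) (R : Type) [CommRing R] (σ : Set (Set (SV g R))) : Prop :=
  IsStdSimplex g R σ ∨ IsIntSimplex g R σ ∨ IsAddSimplex g R σ

/-- Coordinatewise reduction `ℤ^{2g} → (ℤ/2)^{2g}`. -/
def rMap (g : ℕ) (v : SV g ℤ) : SV g (ZMod 2) := fun i => ((v i : ℤ) : ZMod 2)

/-- The reduction map on simplices, sending each lax vector `⟨v⟩` (as a set) to its image. -/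
def rSimp (g : ℕ) (σ : Set (Set (SV g ℤ))) : Set (Set (SV g (ZMod 2))) :=
  (fun s => rMap g '' s) '' σ

/-- The group of `R`-linear automorphisms of `R^{2g}`. -/
abbrev SAut (g : ℕ) (R : Type) [CommRing R] : Type := (SV g R) ≃ₗ[R] (SV g R)

/-- The symplectic group `Sp_{2g}(R)`, as the subgroup of linear automorphisms of
`R^{2g}` preserving the standard symplectic form. -/
def Sp (g : ℕ) (R : Type) [CommRing R] : Subgroup (SAut g R) where
  carrier := {M | ∀ v w, symplForm g R (M v) (M w) = symplForm g R v w}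
  one_mem' := by intro v w; rfl
  mul_mem' := by
    intro M N hM hN v w
    exact (hM (N v) (N w)).trans (hN v w)
  inv_mem' := by
    intro M hM v w
    have h := hM (M.symm v) (M.symm w)
    simpa using h.symm

/-- The level 2 congruence subgroup `Sp_{2g}(ℤ)[2]`, the kernel of the reduction
`Sp_{2g}(ℤ) → Sp_{2g}(ℤ/2)`: symplectic automorphisms acting trivially mod 2. -/
def SpLevel2 (g : ℕ) : Subgroup (SAut g ℤ) where
  carrier := {M | M ∈ Sp g ℤ ∧ ∀ v, rMap g (M v) = rMap g v}
  one_mem' := ⟨(Sp g ℤ).one_mem, fun _ => rfl⟩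
  mul_mem' := by
    rintro M N ⟨hM, hM2⟩ ⟨hN, hN2⟩
    exact ⟨(Sp g ℤ).mul_mem hM hN, fun v => ((hM2 (N v)).trans (hN2 v) : _)⟩
  inv_mem' := by
    rintro M ⟨hM, hM2⟩
    refine ⟨(Sp g ℤ).inv_mem hM, fun v => ?_⟩
    have := hM2 (M.symm v)
    simp only [LinearEquiv.apply_symm_apply] at this
    exact this.symm ▸ rfl

/-!
Over `𝔽₂`, the transvection `x ↦ x + ω(x, v) v` along `v = x + y` sends `x` to `y` whenever
`ω(x, y) = 1`. Transvections along vectors orthogonal to the first `k` standard hyperbolic pairs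
fix those pairs, and on their (nondegenerate) orthogonal complement they act transitively on
hyperbolic pairs. Inductively, every symplectic basis of `𝔽₂^{2g}` is carried to the standard
one by a product of transvections. A transvection along `v` is the reduction of the integral
transvection along any lift of `v`, so the inverse of this product is the reduction of some
`N ∈ Sp_{2g}(ℤ)`, and the image under `N` of the standard basis of `ℤ^{2g}` lifts the given
basis.
-/

section Form

variable {g : ℕ} {R : Type} [CommRing R]

lemma symplForm_add_left (u v w : SV g R) :
    symplForm g R (u + v) w = symplForm g R u w + symplForm g R v w := by
  simp only [symplForm, Pi.add_apply, ← Finset.sum_add_distrib]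
  exact Finset.sum_congr rfl fun _ _ => by ring

lemma symplForm_add_right (u v w : SV g R) :
    symplForm g R u (v + w) = symplForm g R u v + symplForm g R u w := by
  simp only [symplForm, Pi.add_apply, ← Finset.sum_add_distrib]
  exact Finset.sum_congr rfl fun _ _ => by ring

lemma symplForm_sub_left (u v w : SV g R) :
    symplForm g R (u - v) w = symplForm g R u w - symplForm g R v w := by
  simp only [symplForm, Pi.sub_apply, ← Finset.sum_sub_distrib]
  exact Finset.sum_congr rfl fun _ _ => by ring

lemma symplForm_smul_left (c : R) (v w : SV g R) :
    symplForm g R (c • v) w = c * symplForm g R v w := by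
  simp only [symplForm, Pi.smul_apply, smul_eq_mul, Finset.mul_sum]
  exact Finset.sum_congr rfl fun _ _ => by ring

lemma symplForm_smul_right (c : R) (v w : SV g R) :
    symplForm g R v (c • w) = c * symplForm g R v w := by
  simp only [symplForm, Pi.smul_apply, smul_eq_mul, Finset.mul_sum]
  exact Finset.sum_congr rfl fun _ _ => by ring

lemma symplForm_zero_left (w : SV g R) : symplForm g R 0 w = 0 := by
  simpa using symplForm_smul_left (0 : R) 0 w

lemma symplForm_self (v : SV g R) : symplForm g R v v = 0 :=
  Finset.sum_eq_zero fun _ _ => by ring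

lemma symplForm_swap (v w : SV g R) : symplForm g R v w = -symplForm g R w v := by
  simp only [symplForm, ← Finset.sum_neg_distrib]
  exact Finset.sum_congr rfl fun _ _ => by ring

end Form

section Standard

variable {g : ℕ} {R : Type} [CommRing R]

def stdA (g : ℕ) (R : Type) [CommRing R] (i : Fin g) : SV g R := Pi.single ⟨i, by omega⟩ 1

def stdB (g : ℕ) (R : Type) [CommRing R] (i : Fin g) : SV g R := Pi.single ⟨g + i, by omega⟩ 1

lemma symplForm_stdA_right (v : SV g R) (i : Fin g) :
    symplForm g R v (stdA g R i) = -v ⟨g + i, by omega⟩ := by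
  have h (j : Fin g) : g + (j : ℕ) ≠ i := by omega
  simp [symplForm, stdA, Pi.single_apply, Fin.val_inj, h]

lemma symplForm_stdB_right (v : SV g R) (i : Fin g) :
    symplForm g R v (stdB g R i) = v ⟨i, by omega⟩ := by
  have h (j : Fin g) : (j : ℕ) ≠ g + i := by omega
  simp [symplForm, stdB, Pi.single_apply, Fin.val_inj, h]

lemma symplForm_stdA_stdA (i j : Fin g) : symplForm g R (stdA g R i) (stdA g R j) = 0 := by
  have : g + (j : ℕ) ≠ i := by omega
  rw [symplForm_stdA_right]
  simp [stdA, this]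

lemma symplForm_stdB_stdB (i j : Fin g) : symplForm g R (stdB g R i) (stdB g R j) = 0 := by
  have : (j : ℕ) ≠ g + i := by omega
  rw [symplForm_stdB_right]
  simp [stdB, this]

lemma symplForm_stdA_stdB (i j : Fin g) :
    symplForm g R (stdA g R i) (stdB g R j) = if i = j then 1 else 0 := by
  simp [symplForm_stdB_right, stdA, Pi.single_apply, Fin.val_inj, eq_comm]

lemma isSymplBasis_std : IsSymplBasis g R (stdA g R) (stdB g R) := by
  refine ⟨?_, symplForm_stdA_stdA, symplForm_stdB_stdB, symplForm_stdA_stdB⟩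
  refine ⟨(Pi.basisFun R (Fin (2 * g))).reindex
    (finSumFinEquiv.trans (finCongr (two_mul g).symm)).symm, fun i => ?_, fun i => ?_⟩
  · simp [stdA]; rfl
  · simp [stdB]; congr 1; ext; simp [add_comm]

lemma eq_zero_of_forall_symplForm_std {v : SV g R} (hA : ∀ i, symplForm g R v (stdA g R i) = 0)
    (hB : ∀ i, symplForm g R v (stdB g R i) = 0) : v = 0 := by
  funext p
  by_cases hp : (p : ℕ) < g
  · simpa [symplForm_stdB_right] using hB ⟨p, hp⟩
  · have h := hA ⟨p - g, by omega⟩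
    rw [symplForm_stdA_right, neg_eq_zero] at h
    rw [Pi.zero_apply, ← h]
    congr; ext; simp; omega

end Standard

section Transvection
variable {g : ℕ} {R : Type} [CommRing R]

def transv (v : SV g R) : SAut g R where
  toFun x := x + symplForm g R x v • v
  invFun x := x - symplForm g R x v • v
  map_add' x y := by
    simp only [symplForm_add_left, add_smul]
    abel
  map_smul' c x := by
    simp only [symplForm_smul_left, RingHom.id_apply, smul_smul, smul_add]
  left_inv x := by
    simp [symplForm_add_left, symplForm_smul_left, symplForm_self]
  right_inv x := by
    simp [symplForm_sub_left, symplForm_smul_left, symplForm_self]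

@[simp]
lemma transv_apply (v x : SV g R) : transv v x = x + symplForm g R x v • v := rfl

lemma transv_mem_Sp (v : SV g R) : transv v ∈ Sp g R := by
  intro x y
  simp only [transv_apply, symplForm_add_left, symplForm_add_right, symplForm_smul_left,
    symplForm_smul_right, symplForm_self, symplForm_swap v y]
  ring

def transvGroup (W : Set (SV g R)) : Subgroup (SAut g R) :=
  Subgroup.closure (transv '' W)

lemma transvGroup_le_Sp (W : Set (SV g R)) : transvGroup W ≤ Sp g R :=
  Subgroup.closure_le _ |>.2 <| Set.image_subset_iff.2 fun v _ => transv_mem_Sp v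

lemma transv_mem_transvGroup {W : Set (SV g R)} {v : SV g R} (hv : v ∈ W) :
    transv v ∈ transvGroup W :=
  Subgroup.subset_closure (Set.mem_image_of_mem _ hv)

lemma transvGroup_mono {W W' : Set (SV g R)} (h : W ⊆ W') : transvGroup W ≤ transvGroup W' :=
  Subgroup.closure_mono (Set.image_mono h)

lemma transvGroup_apply_eq_self {W : Set (SV g R)} {x : SV g R}
    (hx : ∀ u ∈ W, symplForm g R x u = 0) {M : SAut g R} (hM : M ∈ transvGroup W) :
    M x = x := by
  suffices transvGroup W ≤ MulAction.stabilizer (SAut g R) x from this hM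
  refine Subgroup.closure_le _ |>.2 <| Set.image_subset_iff.2 fun u hu => ?_
  simp [MulAction.mem_stabilizer_iff, LinearEquiv.smul_def, hx u hu]

lemma transvGroup_apply_mem {W : Submodule R (SV g R)} {M : SAut g R}
    (hM : M ∈ transvGroup (W : Set (SV g R))) {x : SV g R} (hx : x ∈ W) : M x ∈ W := by
  induction hM using Subgroup.closure_induction'' generalizing x with
  | mem _ h =>
    obtain ⟨u, hu, rfl⟩ := h
    exact W.add_mem hx (W.smul_mem _ hu)
  | inv_mem _ h =>
    obtain ⟨u, hu, rfl⟩ := h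
    exact W.sub_mem hx (W.smul_mem _ hu)
  | one => exact hx
  | mul _ _ _ _ hM hN => exact hM (hN hx)

end Transvection

section Family
variable {g : ℕ} {R : Type} [CommRing R]

def IsSymplFamily (g : ℕ) (R : Type) [CommRing R] (a b : Fin g → SV g R) : Prop :=
  (∀ i j, symplForm g R (a i) (a j) = 0) ∧
  (∀ i j, symplForm g R (b i) (b j) = 0) ∧
  (∀ i j, symplForm g R (a i) (b j) = if i = j then 1 else 0)

lemma IsSymplBasis.isSymplFamily {a b : Fin g → SV g R} (h : IsSymplBasis g R a b) :
    IsSymplFamily g R a b :=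
  h.2

lemma IsSymplFamily.map {a b : Fin g → SV g R} (h : IsSymplFamily g R a b) {M : SAut g R}
    (hM : M ∈ Sp g R) : IsSymplFamily g R (fun i => M (a i)) (fun i => M (b i)) := by
  simpa only [IsSymplFamily, hM _ _] using h

lemma IsSymplBasis.map {a b : Fin g → SV g R} (h : IsSymplBasis g R a b) {M : SAut g R}
    (hM : M ∈ Sp g R) : IsSymplBasis g R (fun i => M (a i)) (fun i => M (b i)) := by
  obtain ⟨⟨B, ha, hb⟩, hab⟩ := h
  exact ⟨⟨B.map M, by simp [ha], by simp [hb]⟩, IsSymplFamily.map hab hM⟩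

def IsSymplNondegenerate (W : Submodule R (SV g R)) : Prop :=
  ∀ x ∈ W, x ≠ 0 → ∃ z ∈ W, symplForm g R x z ≠ 0

end Family

section Char2
variable {g : ℕ}

local notation "ω" => symplForm g (ZMod 2)

lemma zmod_two_eq_zero_or_eq_one (c : ZMod 2) : c = 0 ∨ c = 1 := by
  revert c; decide

lemma transv_add_apply_left {x y : SV g (ZMod 2)} (h : ω x y = 1) : transv (x + y) x = y := by
  rw [transv_apply, symplForm_add_right, symplForm_self, zero_add, h, one_smul, ← add_assoc,
    ZModModule.add_self, zero_add]

variable {W : Submodule (ZMod 2) (SV g (ZMod 2))}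

lemma IsSymplNondegenerate.exists_common_partner (hW : IsSymplNondegenerate W)
    {x y : SV g (ZMod 2)} (hx : x ∈ W) (hy : y ∈ W) (hx0 : x ≠ 0) (hy0 : y ≠ 0) :
    ∃ z ∈ W, ω x z = 1 ∧ ω y z = 1 := by
  obtain ⟨z₁, hz₁, h₁⟩ := hW x hx hx0
  obtain ⟨z₂, hz₂, h₂⟩ := hW y hy hy0
  replace h₁ := (zmod_two_eq_zero_or_eq_one _).resolve_left h₁
  replace h₂ := (zmod_two_eq_zero_or_eq_one _).resolve_left h₂
  rcases zmod_two_eq_zero_or_eq_one (ω x z₂) with hxz₂ | hxz₂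
  · rcases zmod_two_eq_zero_or_eq_one (ω y z₁) with hyz₁ | hyz₁
    · refine ⟨z₁ + z₂, W.add_mem hz₁ hz₂, ?_, ?_⟩
      · rw [symplForm_add_right, h₁, hxz₂, add_zero]
      · rw [symplForm_add_right, hyz₁, h₂, zero_add]
    · exact ⟨z₁, hz₁, h₁, hyz₁⟩
  · exact ⟨z₂, hz₂, hxz₂, h₂⟩

lemma IsSymplNondegenerate.exists_mem_transvGroup_apply_eq (hW : IsSymplNondegenerate W)
    {x y : SV g (ZMod 2)} (hx : x ∈ W) (hy : y ∈ W) (hx0 : x ≠ 0) (hy0 : y ≠ 0) :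
    ∃ M ∈ transvGroup (W : Set (SV g (ZMod 2))), M x = y := by
  rcases zmod_two_eq_zero_or_eq_one (ω x y) with hxy | hxy
  · obtain ⟨z, hz, hxz, hyz⟩ := hW.exists_common_partner hx hy hx0 hy0
    have hzy : ω z y = 1 := by rw [symplForm_swap, hyz]; rfl
    refine ⟨transv (z + y) * transv (x + z), mul_mem (transv_mem_transvGroup (W.add_mem hz hy))
      (transv_mem_transvGroup (W.add_mem hx hz)), ?_⟩
    rw [LinearEquiv.mul_apply, transv_add_apply_left hxz, transv_add_apply_left hzy]
  · exact ⟨transv (x + y), transv_mem_transvGroup (W.add_mem hx hy), transv_add_apply_left hxy⟩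

lemma exists_mem_transvGroup_apply_eq_of_symplForm_eq_one {e b f : SV g (ZMod 2)}
    (he : e ∈ W) (hb : b ∈ W) (hf : f ∈ W) (heb : ω e b = 1) (hef : ω e f = 1) :
    ∃ M ∈ transvGroup {u | u ∈ W ∧ ω e u = 0}, M b = f := by
  rcases zmod_two_eq_zero_or_eq_one (ω b f) with hbf | hbf
  · have hbe : transv e b = b + e := by
      rw [transv_apply, symplForm_swap, heb, ZMod.neg_eq_self_mod_two, one_smul]
    have hbef : ω (b + e) f = 1 := by rw [symplForm_add_left, hbf, hef, zero_add]
    refine ⟨transv (b + e + f) * transv e,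
      mul_mem (transv_mem_transvGroup ⟨W.add_mem (W.add_mem hb he) hf, ?_⟩)
        (transv_mem_transvGroup ⟨he, symplForm_self e⟩), ?_⟩
    · rw [symplForm_add_right, symplForm_add_right, heb, symplForm_self, hef]; rfl
    · rw [LinearEquiv.mul_apply, hbe, transv_add_apply_left hbef]
  · refine ⟨transv (b + f), transv_mem_transvGroup ⟨W.add_mem hb hf, ?_⟩,
      transv_add_apply_left hbf⟩
    rw [symplForm_add_right, heb, hef]; rfl

lemma IsSymplNondegenerate.exists_mem_transvGroup_apply_pair (hW : IsSymplNondegenerate W)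
    {a b e f : SV g (ZMod 2)} (ha : a ∈ W) (hb : b ∈ W) (he : e ∈ W) (hf : f ∈ W)
    (hab : ω a b = 1) (hef : ω e f = 1) :
    ∃ M ∈ transvGroup (W : Set (SV g (ZMod 2))), M a = e ∧ M b = f := by
  have ne_zero_of_pair {x y : SV g (ZMod 2)} (h : ω x y = 1) : x ≠ 0 := by
    rintro rfl
    simp [symplForm_zero_left] at h
  obtain ⟨M₁, hM₁, rfl⟩ :=
    hW.exists_mem_transvGroup_apply_eq ha he (ne_zero_of_pair hab) (ne_zero_of_pair hef)
  have hM₁ab : ω (M₁ a) (M₁ b) = 1 := (transvGroup_le_Sp _ hM₁ a b).trans hab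
  obtain ⟨M₂, hM₂, hM₂b⟩ := exists_mem_transvGroup_apply_eq_of_symplForm_eq_one he
    (transvGroup_apply_mem hM₁ hb) hf hM₁ab hef
  exact ⟨M₂ * M₁, mul_mem (transvGroup_mono (fun _ hu => hu.1) hM₂) hM₁,
    transvGroup_apply_eq_self (fun _ hu => hu.2) hM₂, hM₂b⟩

end Char2

section StdComplement
variable {g : ℕ} {R : Type} [CommRing R]

def stdComplement (g : ℕ) (R : Type) [CommRing R] (k : ℕ) : Submodule R (SV g R) where
  carrier := {x | ∀ i : Fin g, (i : ℕ) < k →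
    symplForm g R (stdA g R i) x = 0 ∧ symplForm g R (stdB g R i) x = 0}
  add_mem' hx hy i hi := by simp [symplForm_add_right, hx i hi, hy i hi]
  zero_mem' i _ := by simp [symplForm_swap _ 0, symplForm_zero_left]
  smul_mem' c x hx i hi := by simp [symplForm_smul_right, hx i hi]

lemma stdA_mem_stdComplement {k : ℕ} {j : Fin g} (hj : k ≤ j) :
    stdA g R j ∈ stdComplement g R k := fun i hi =>
  ⟨symplForm_stdA_stdA i j, by
    rw [symplForm_swap, symplForm_stdA_stdB, if_neg (by rintro rfl; omega), neg_zero]⟩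

lemma stdB_mem_stdComplement {k : ℕ} {j : Fin g} (hj : k ≤ j) :
    stdB g R j ∈ stdComplement g R k := fun i hi =>
  ⟨by rw [symplForm_stdA_stdB, if_neg (by rintro rfl; omega)], symplForm_stdB_stdB i j⟩

lemma isSymplNondegenerate_stdComplement (k : ℕ) :
    IsSymplNondegenerate (stdComplement g R k) := by
  intro x hx hx0
  by_contra! h
  refine hx0 (eq_zero_of_forall_symplForm_std (fun j => ?_) (fun j => ?_)) <;>
    by_cases hj : (j : ℕ) < k
  · rw [symplForm_swap, (hx j hj).1, neg_zero]
  · exact h _ (stdA_mem_stdComplement (not_lt.1 hj))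
  · rw [symplForm_swap, (hx j hj).2, neg_zero]
  · exact h _ (stdB_mem_stdComplement (not_lt.1 hj))

lemma IsSymplFamily.mem_stdComplement {a b : Fin g → SV g R} (h : IsSymplFamily g R a b)
    {k : ℕ} (hstd : ∀ i : Fin g, (i : ℕ) < k → a i = stdA g R i ∧ b i = stdB g R i)
    {j : Fin g} (hj : k ≤ j) : a j ∈ stdComplement g R k ∧ b j ∈ stdComplement g R k := by
  obtain ⟨haa, hbb, hab⟩ := h
  refine ⟨fun i hi => ?_, fun i hi => ?_⟩ <;> rw [← (hstd i hi).1, ← (hstd i hi).2]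
  · exact ⟨haa i j, by rw [symplForm_swap, hab, if_neg (by rintro rfl; omega), neg_zero]⟩
  · exact ⟨by rw [hab, if_neg (by rintro rfl; omega)], hbb i j⟩

end StdComplement

lemma IsSymplFamily.exists_mem_transvGroup_eq_std {g : ℕ} {a b : Fin g → SV g (ZMod 2)}
    (h : IsSymplFamily g (ZMod 2) a b) :
    ∃ M ∈ transvGroup (Set.univ : Set (SV g (ZMod 2))),
      ∀ i, M (a i) = stdA g (ZMod 2) i ∧ M (b i) = stdB g (ZMod 2) i := by
  suffices ∀ k ≤ g, ∃ M ∈ transvGroup (Set.univ : Set (SV g (ZMod 2))), ∀ i : Fin g,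
      (i : ℕ) < k → M (a i) = stdA g (ZMod 2) i ∧ M (b i) = stdB g (ZMod 2) i by
    simpa using this g le_rfl
  intro k hk
  induction k with
  | zero => exact ⟨1, one_mem _, fun i hi => absurd hi (Nat.not_lt_zero _)⟩
  | succ k ih =>
    obtain ⟨M, hM, hMstd⟩ := ih (by omega)
    set j : Fin g := ⟨k, by omega⟩
    have hMab := h.map (transvGroup_le_Sp _ hM)
    obtain ⟨ha, hb⟩ := hMab.mem_stdComplement hMstd (le_refl j.1)
    obtain ⟨N, hN, hNa, hNb⟩ :=
      (isSymplNondegenerate_stdComplement k).exists_mem_transvGroup_apply_pair ha hb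
        (stdA_mem_stdComplement (j := j) le_rfl) (stdB_mem_stdComplement (j := j) le_rfl)
        (by simpa using hMab.2.2 j j) (by simp [symplForm_stdA_stdB])
    refine ⟨N * M, mul_mem (transvGroup_mono (Set.subset_univ _) hN) hM, fun i hi => ?_⟩
    rcases Nat.lt_succ_iff_lt_or_eq.1 hi with hi | hi
    · rw [LinearEquiv.mul_apply, LinearEquiv.mul_apply, (hMstd i hi).1, (hMstd i hi).2]
      exact ⟨transvGroup_apply_eq_self (fun u hu => (hu i hi).1) hN,
        transvGroup_apply_eq_self (fun u hu => (hu i hi).2) hN⟩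
    · obtain rfl : i = j := Fin.ext hi
      exact ⟨hNa, hNb⟩

section Reduction
variable {g : ℕ}

lemma rMap_symplForm (v w : SV g ℤ) :
    symplForm g (ZMod 2) (rMap g v) (rMap g w) = symplForm g ℤ v w := by
  simp [symplForm, rMap]

lemma rMap_transv (v x : SV g ℤ) : rMap g (transv v x) = transv (rMap g v) (rMap g x) := by
  funext i
  simp [rMap, ← rMap_symplForm]

lemma rMap_surjective : Function.Surjective (rMap g) :=
  fun v => ⟨fun i => (v i).val, funext fun i => by simp [rMap]⟩

lemma rMap_single (p : Fin (2 * g)) : rMap g (Pi.single p 1) = Pi.single p 1 := by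
  funext q
  by_cases h : q = p <;> simp [rMap, h]

def spIntReduction (g : ℕ) : Subgroup (SAut g (ZMod 2)) where
  carrier := {M | ∃ N ∈ Sp g ℤ, ∀ v, rMap g (N v) = M (rMap g v)}
  one_mem' := ⟨1, one_mem _, fun _ => rfl⟩
  mul_mem' := by
    rintro M M' ⟨N, hN, hNM⟩ ⟨N', hN', hNM'⟩
    exact ⟨N * N', mul_mem hN hN', fun v => by simp [hNM, hNM']⟩
  inv_mem' := by
    rintro M ⟨N, hN, hNM⟩
    refine ⟨N⁻¹, inv_mem hN, fun v => M.injective ?_⟩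
    simp [← hNM]

lemma transvGroup_univ_le_spIntReduction :
    transvGroup (Set.univ : Set (SV g (ZMod 2))) ≤ spIntReduction g := by
  refine Subgroup.closure_le _ |>.2 <| Set.image_subset_iff.2 fun v _ => ?_
  obtain ⟨v, rfl⟩ := rMap_surjective v
  exact ⟨transv v, transv_mem_Sp v, rMap_transv v⟩

lemma IsSymplFamily.exists_lift {a b : Fin g → SV g (ZMod 2)}
    (h : IsSymplFamily g (ZMod 2) a b) :
    ∃ a' b' : Fin g → SV g ℤ, IsSymplBasis g ℤ a' b' ∧
      (∀ i, rMap g (a' i) = a i) ∧ ∀ i, rMap g (b' i) = b i := by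
  obtain ⟨M, hM, hMstd⟩ := h.exists_mem_transvGroup_eq_std
  obtain ⟨N, hN, hNM⟩ := transvGroup_univ_le_spIntReduction (inv_mem hM)
  refine ⟨fun i => N (stdA g ℤ i), fun i => N (stdB g ℤ i), isSymplBasis_std.map hN,
    fun i => ?_, fun i => ?_⟩
  · rw [hNM, stdA, rMap_single, ← stdA, ← (hMstd i).1]
    simp
  · rw [hNM, stdB, rMap_single, ← stdB, ← (hMstd i).2]
    simp

end Reduction

theorem lift_partial_symplectic_basis_general (g : ℕ) (k l : ℕ)
    (α : Fin k → SV g (ZMod 2)) (β : Fin l → SV g (ZMod 2))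
    (h : IsPartialSymplBasis g (ZMod 2) α β) :
    ∃ (a : Fin k → SV g ℤ) (b : Fin l → SV g ℤ),
      IsPartialSymplBasis g ℤ a b ∧
      (∀ i, rMap g (a i) = α i) ∧ (∀ j, rMap g (b j) = β j) := by
  obtain ⟨hk, hl, A, B, hAB, hA, hB⟩ := h
  obtain ⟨A', B', hAB', hA', hB'⟩ := hAB.isSymplFamily.exists_lift
  exact ⟨fun i => A' (Fin.castLE hk i), fun j => B' (Fin.castLE hl j),
    ⟨hk, hl, A', B', hAB', fun _ => rfl, fun _ => rfl⟩, fun i => (hA' _).trans (hA i),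
    fun j => (hB' _).trans (hB j)⟩

/-- Every partial symplectic basis of `(ℤ/2)^{2g}` lifts to a partial
symplectic basis of `ℤ^{2g}`. -/
theorem lift_partial_symplectic_basis (g : ℕ) (hg : 1 ≤ g) (k l : ℕ)
    (α : Fin k → SV g (ZMod 2)) (β : Fin l → SV g (ZMod 2))
    (h : IsPartialSymplBasis g (ZMod 2) α β) :
    ∃ (a : Fin k → SV g ℤ) (b : Fin l → SV g ℤ),
      IsPartialSymplBasis g ℤ a b ∧
      (∀ i, rMap g (a i) = α i) ∧ (∀ j, rMap g (b j) = β j) :=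
  lift_partial_symplectic_basis_general g k l α β h
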